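/- Consider the Temporal Hamiltonian Path framework on a temporal graph 𝒢 with vertex set V: label set X = {visited, unvisited, current}, one counter h, initial states S_0 = {the state labelling v current, every other vertex unvisited, with h = 1 : v ∈ F_0}, transition predicate Tr((l_1, h_1), (l_2, h_2), G) holding if and only if either (a) the set of current-labelled vertices of l_1 minus that of l_2 is a single vertex c_1, the set of current-labelled vertices of l_2 minus that of l_1 is a single vertex c_2, c_1c_2 is an edge of G, c_2 is labelled unvisited by l_1, h_2 = h_1 + 1, and the visited set of l_2 equals the visited set of l_1 together with c_1 (all other vertices being labelled identically), or (b) (l_1, h_1) = (l_2, h_2); and acceptance predicate Ac((l, h)) holding if and only if h = |V|. Then this data satisfies the conditions of a (1,X)-locally temporally uniform problem with U = unvisited: (L1) every state in S_0 gives label unvisited to every vertex not in A_0; (L2) for all states s, s' and every static graph G on V, if Tr(s, s', G) holds then s and s' give the same label to every isolated vertex of G; (L3) for all states r, r', s, s' and every static graph G on V, if r and s agree on the non-isolated vertices of G, r and r' give the same label to every isolated vertex of G, s and s' give the same label to every isolated vertex of G, and r' and s' agree on the non-isolated vertices of G, then Tr(r, r', G) holds if and only if Tr(s, s', G) holds;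 and (L4) for all states s, s' that agree on A_Λ, Ac(s) holds if and only if Ac(s') holds. -/
import Mathlib


/-- The labels for the Temporal Hamiltonian Path dynamic program. -/
inductive HLabel : Type where
  | visited : HLabel
  | unvisited : HLabel
  | current : HLabel
deriving DecidableEq

/-- A `(1, X)`-state for the Temporal Hamiltonian Path problem: a labelling of the
vertices together with the single counter `h`. -/
abbrev HState (V : Type) : Type := (V → HLabel) × ℤ

variable {V : Type} [Fintype V] [DecidableEq V]

/-- Two states agree on `W ⊆ V` if their labellings coincide on `W` and their counters
are equal. -/
def agreeOn (s s' : HState V) (W : Set V) : Prop :=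
  (∀ x ∈ W, s.1 x = s'.1 x) ∧ s.2 = s'.2

/-- The bag `F_t` of the VIM sequence: vertices `x` with edges `xu`, `xw` such that
`min λ(xu) ≤ t ≤ max λ(xw)`.  (By convention `F_0 = F_1`.) -/
def vimBag (G : SimpleGraph V) (lam : Sym2 V → Finset ℕ) (t : ℕ) : Set V :=
  {x | ∃ u w, G.Adj x u ∧ G.Adj x w ∧
    (∃ t1 ∈ lam s(x, u), t1 ≤ t) ∧ (∃ t2 ∈ lam s(x, w), t ≤ t2)}

/-- The set `A_t` of vertices having an incident edge active at time `t`.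
(By convention `A_0 = A_1`.) -/
def activeSet (G : SimpleGraph V) (lam : Sym2 V → Finset ℕ) (t : ℕ) : Set V :=
  {x | ∃ u, G.Adj x u ∧ t ∈ lam s(x, u)}

/-- The transition predicate for Temporal Hamiltonian Path: either the current vertex
moves along an edge of `G` to an unvisited vertex (the old current vertex becoming
visited, the counter increasing by one, and all other vertices keeping their labels), or
the two states are equal. -/
def hamTr (s1 s2 : HState V) (H : SimpleGraph V) : Prop :=
  (∃ c1 c2 : V,
    {x | s1.1 x = HLabel.current} \ {x | s2.1 x = HLabel.current} = {c1} ∧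
    {x | s2.1 x = HLabel.current} \ {x | s1.1 x = HLabel.current} = {c2} ∧
    H.Adj c1 c2 ∧ s1.1 c2 = HLabel.unvisited ∧ s2.2 = s1.2 + 1 ∧
    {x | s2.1 x = HLabel.visited} = {x | s1.1 x = HLabel.visited} ∪ {c1} ∧
    (∀ u : V, u ≠ c1 → u ≠ c2 → s1.1 u = s2.1 u)) ∨
  s1 = s2

/-- The initial states: for each `u ∈ F_0`, label `u` current, every other vertex
unvisited, and set the counter to `1`. -/
def hamInit (G : SimpleGraph V) (lam : Sym2 V → Finset ℕ) : Set (HState V) :=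
  {s | ∃ u ∈ vimBag G lam 1,
    s = (fun x => if x = u then HLabel.current else HLabel.unvisited, (1 : ℤ))}

/-- The acceptance predicate for Temporal Hamiltonian Path: the counter equals `|V|`. -/
def hamAc (s : HState V) : Prop :=
  s.2 = (Fintype.card V : ℤ)

lemma tr_transfer (r r' s s' : HState V) (H : SimpleGraph V)
    (h1 : agreeOn r s {x | ∃ u, H.Adj x u})
    (h2 : ∀ x : V, (∀ u, ¬ H.Adj x u) → r.1 x = r'.1 x)
    (h3 : ∀ x : V, (∀ u, ¬ H.Adj x u) → s.1 x = s'.1 x)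
    (h4 : agreeOn r' s' {x | ∃ u, H.Adj x u})
    (htr : hamTr r r' H) : hamTr s s' H := by
  rcases htr with ⟨c1, c2, hA, hB, hadj, hunv, hcnt, hvis, hoth⟩ | heq
  · left
    have hc1 : ∃ u, H.Adj c1 u := ⟨c2, hadj⟩
    have hc2 : ∃ u, H.Adj c2 u := ⟨c1, hadj.symm⟩
    refine ⟨c1, c2, ?_, ?_, hadj, ?_, ?_, ?_, ?_⟩
    · ext x
      simp only [Set.mem_diff, Set.mem_setOf_eq, Set.mem_singleton_iff]
      by_cases hx : ∃ u, H.Adj x u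
      · rw [← h1.1 x hx, ← h4.1 x hx]
        have := Set.ext_iff.mp hA x
        simpa [Set.mem_diff, Set.mem_setOf_eq] using this
      · push_neg at hx
        rw [h3 x hx]
        constructor
        · rintro ⟨h, hn⟩; exact absurd h hn
        · rintro rfl; exact absurd hc1 (by push_neg; exact hx)
    · ext x
      simp only [Set.mem_diff, Set.mem_setOf_eq, Set.mem_singleton_iff]
      by_cases hx : ∃ u, H.Adj x u
      · rw [← h1.1 x hx, ← h4.1 x hx]
        have := Set.ext_iff.mp hB x
        simpa [Set.mem_diff, Set.mem_setOf_eq] using this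
      · push_neg at hx
        rw [h3 x hx]
        constructor
        · rintro ⟨h, hn⟩; exact absurd h hn
        · rintro rfl; exact absurd hc2 (by push_neg; exact hx)
    · rw [← h1.1 c2 hc2]; exact hunv
    · rw [← h1.2, ← h4.2]; exact hcnt
    · ext x
      simp only [Set.mem_union, Set.mem_setOf_eq, Set.mem_singleton_iff]
      by_cases hx : ∃ u, H.Adj x u
      · rw [← h1.1 x hx, ← h4.1 x hx]
        have := Set.ext_iff.mp hvis x
        simp only [Set.mem_union, Set.mem_setOf_eq, Set.mem_singleton_iff] at this
        tauto
      · push_neg at hx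
        rw [← h3 x hx]
        constructor
        · intro h; exact Or.inl h
        · rintro (h | rfl)
          · exact h
          · exact absurd hc1 (by push_neg; exact hx)
    · intro u hu1 hu2
      by_cases hx : ∃ w, H.Adj u w
      · rw [← h1.1 u hx, ← h4.1 u hx]; exact hoth u hu1 hu2
      · push_neg at hx; exact h3 u hx
  · right
    subst heq
    refine Prod.ext ?_ (h1.2.symm.trans h4.2)
    funext x
    by_cases hx : ∃ u, H.Adj x u
    · exact (h1.1 x hx).symm.trans (h4.1 x hx)
    · push_neg at hx; exact h3 x hx

/-- The Temporal Hamiltonian Path data (initial states, transition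
predicate, acceptance predicate) satisfies the conditions (L1)–(L4) of a
`(1, X)`-locally temporally uniform problem with `U = unvisited`. -/
theorem stmt_19 (G : SimpleGraph V) (lam : Sym2 V → Finset ℕ) (Λ : ℕ)
    (hne : ∀ e ∈ G.edgeSet, (lam e).Nonempty)
    (hempty : ∀ e, e ∉ G.edgeSet → lam e = ∅)
    (hbdd : ∀ e, ∀ t ∈ lam e, 1 ≤ t ∧ t ≤ Λ)
    (hlife : ∃ e ∈ G.edgeSet, Λ ∈ lam e) :
    (∀ s ∈ hamInit G lam, ∀ x : V, x ∉ activeSet G lam 1 →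
      s.1 x = HLabel.unvisited) ∧
    (∀ (s s' : HState V) (H : SimpleGraph V), hamTr s s' H →
      ∀ x : V, (∀ u, ¬ H.Adj x u) → s.1 x = s'.1 x) ∧
    (∀ (r r' s s' : HState V) (H : SimpleGraph V),
      agreeOn r s {x | ∃ u, H.Adj x u} →
      (∀ x : V, (∀ u, ¬ H.Adj x u) → r.1 x = r'.1 x) →
      (∀ x : V, (∀ u, ¬ H.Adj x u) → s.1 x = s'.1 x) →
      agreeOn r' s' {x | ∃ u, H.Adj x u} →
      (hamTr r r' H ↔ hamTr s s' H)) ∧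
    (∀ s s' : HState V, agreeOn s s' (activeSet G lam Λ) → (hamAc s ↔ hamAc s')) := by
  refine ⟨?_, ?_, ?_, ?_⟩
  · rintro s ⟨u, hu, rfl⟩ x hx
    simp only
    rw [if_neg]
    rintro rfl
    obtain ⟨u', w, hadj, _, ⟨t1, ht1, ht1le⟩, _⟩ := hu
    have h1 : t1 = 1 := le_antisymm ht1le (hbdd _ _ ht1).1
    exact hx ⟨u', hadj, h1 ▸ ht1⟩
  · intro s s' H htr x hx
    rcases htr with ⟨c1, c2, hA, hB, hadj, _, _, _, hoth⟩ | heq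
    · exact hoth x (fun h => hx c2 (h ▸ hadj)) (fun h => hx c1 (h ▸ hadj.symm))
    · rw [heq]
  · intro r r' s s' H h1 h2 h3 h4
    constructor
    · exact tr_transfer r r' s s' H h1 h2 h3 h4
    · refine tr_transfer s s' r r' H ⟨fun x hx => (h1.1 x hx).symm, h1.2.symm⟩ h3 h2
        ⟨fun x hx => (h4.1 x hx).symm, h4.2.symm⟩
  · intro s s' h
    unfold hamAc
    rw [h.2]
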